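/- arXiv:1102.3642 — 2 statements merged into one kernel-verified Lean document; each statement's English description precedes it below -/
import Mathlib

section
/- Let X and Y be l-dimensional linear subspaces of ℝ^n with orthonormal bases (e_1,…,e_l) ⊂ X and (f_1,…,f_l) ⊂ Y such that |e_j − f_j| ≤ α for each j = 1,…,l. Then the operator norm of π_X − π_Y (where π_X, π_Y are the orthogonal projections onto X and Y) is at most 2lα. -/
/-!
Both projections are sums of rank-one projections, `π_X = ∑ ⟪e_j, ·⟫ e_j` and
`π_Y = ∑ ⟪f_j, ·⟫ f_j`. For unit vectors `u`, `v` the difference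
`⟪u, ·⟫ u - ⟪v, ·⟫ v = ⟪u - v, ·⟫ u + ⟪v, ·⟫ (u - v)` has norm at most `2 ‖u - v‖`;
sum over the `l` basis vectors.
-/

open scoped RealInnerProductSpace

/-- The orthogonal projection onto a subspace of Euclidean space, viewed as a
continuous linear endomorphism of the ambient space. -/
noncomputable def projL {n : ℕ} (X : Submodule ℝ (EuclideanSpace ℝ (Fin n))) :
    EuclideanSpace ℝ (Fin n) →L[ℝ] EuclideanSpace ℝ (Fin n) :=
  X.subtypeL.comp (Submodule.orthogonalProjection X)

open InnerProductSpace

theorem norm_rankOne_self_sub_rankOne_self_le {𝕜 E : Type*} [RCLike 𝕜]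
    [SeminormedAddCommGroup E] [InnerProductSpace 𝕜 E] (u v : E) :
    ‖rankOne 𝕜 u u - rankOne 𝕜 v v‖ ≤ (‖u‖ + ‖v‖) * ‖u - v‖ := by
  have hsplit : rankOne 𝕜 u u - rankOne 𝕜 v v = rankOne 𝕜 (u - v) u + rankOne 𝕜 v (u - v) := by
    simp only [map_sub, sub_apply]
    abel
  calc ‖rankOne 𝕜 u u - rankOne 𝕜 v v‖
      ≤ ‖rankOne 𝕜 (u - v) u‖ + ‖rankOne 𝕜 v (u - v)‖ := hsplit ▸ norm_add_le _ _
    _ = (‖u‖ + ‖v‖) * ‖u - v‖ := by simp only [norm_rankOne]; ring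

theorem Orthonormal.starProjection_span_eq_sum_rankOne {𝕜 E ι : Type*} [RCLike 𝕜]
    [NormedAddCommGroup E] [InnerProductSpace 𝕜 E] [Fintype ι] {e : ι → E}
    (he : Orthonormal 𝕜 e) [(Submodule.span 𝕜 (Set.range e)).HasOrthogonalProjection] :
    (Submodule.span 𝕜 (Set.range e)).starProjection = ∑ i, rankOne 𝕜 (e i) (e i) := by
  let b := (Module.Basis.span he.linearIndependent).toOrthonormalBasis (by
    simpa only [← Module.Basis.span_apply he.linearIndependent] using orthonormal_span he)
  rw [b.starProjection_eq_sum_rankOne]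
  simp [b]

theorem angle_le_of_close_orthonormal_bases_general {n l : ℕ}
    (X Y : Submodule ℝ (EuclideanSpace ℝ (Fin n)))
    (e f : Fin l → EuclideanSpace ℝ (Fin n))
    (he : Orthonormal ℝ e) (hf : Orthonormal ℝ f)
    (heX : Submodule.span ℝ (Set.range e) = X)
    (hfY : Submodule.span ℝ (Set.range f) = Y)
    (α : ℝ) (hα : ∀ j, ‖e j - f j‖ ≤ α) :
    ‖projL X - projL Y‖ ≤ 2 * l * α := by
  subst heX hfY
  change ‖Submodule.starProjection _ - Submodule.starProjection _‖ ≤ _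
  rw [he.starProjection_span_eq_sum_rankOne, hf.starProjection_span_eq_sum_rankOne,
    ← Finset.sum_sub_distrib]
  calc ‖∑ j, (rankOne ℝ (e j) (e j) - rankOne ℝ (f j) (f j))‖
      ≤ ∑ _j : Fin l, 2 * α := by
        refine norm_sum_le_of_le _ fun j _ => ?_
        calc _ ≤ (‖e j‖ + ‖f j‖) * ‖e j - f j‖ := norm_rankOne_self_sub_rankOne_self_le _ _
          _ ≤ 2 * α := by rw [he.1 j, hf.1 j]; linarith [hα j]
    _ = 2 * l * α := by simp; ring

/-- If `X` and `Y` are `l`-dimensional subspaces of `ℝ^n` with orthonormal bases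
`e` and `f` satisfying `‖e j − f j‖ ≤ α`, then `‖π_X − π_Y‖ ≤ 2 l α`. -/
theorem angle_le_of_close_orthonormal_bases {n l : ℕ}
    (X Y : Submodule ℝ (EuclideanSpace ℝ (Fin n)))
    (hX : Module.finrank ℝ X = l) (hY : Module.finrank ℝ Y = l)
    (e f : Fin l → EuclideanSpace ℝ (Fin n))
    (he : Orthonormal ℝ e) (hf : Orthonormal ℝ f)
    (heX : Submodule.span ℝ (Set.range e) = X)
    (hfY : Submodule.span ℝ (Set.range f) = Y)
    (α : ℝ) (hα : ∀ j, ‖e j - f j‖ ≤ α) :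
    ‖projL X - projL Y‖ ≤ 2 * l * α :=
  angle_le_of_close_orthonormal_bases_general X Y e f he hf heX hfY α hα
end

section
/- Let ε₁ = 10^{-1}(10^m+1)^{-1}. Suppose e_1,…,e_m ∈ ℝ^n are orthonormal, h_i ∈ B(e_i, δ) with δ < ε₁/2, and w_i ∈ B(h_i, ε) with ε < ε₁/2, for i = 1,…,m. Then H = span(h_1,…,h_m) and W = span(w_1,…,w_m) are both m-dimensional, and ∠(H,W) ≤ c₃ ε with c₃ = 14m·20^m. -/
/-!
Both families are perturbations of the orthonormal `e`: since `|a i| ≤ ‖∑ a j • e j‖` and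
`m (δ + ε) ≤ 1/2`, the coefficients of a combination of the `h i` (or `w i`) are bounded by
twice its norm. This gives linear independence, and moving each `h i` to `w i` moves a vector
`x` of `H` by at most `2 m ε ‖x‖`, so `H` lies within relative distance `2 m ε` of `W`, and
symmetrically. Two subspaces that are `c`-close to each other in this sense have projections
at distance at most `2 c`, whence `‖P_H − P_W‖ ≤ 4 m ε`.
-/

open scoped RealInnerProductSpace

variable {E : Type*} [NormedAddCommGroup E] [InnerProductSpace ℝ E]

namespace Submodule

variable {K L : Submodule ℝ E} [K.HasOrthogonalProjection] [L.HasOrthogonalProjection]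

theorem norm_sub_starProjection_le_of_mem (x : E) {y : E} (hy : y ∈ K) :
    ‖x - K.starProjection x‖ ≤ ‖x - y‖ := by
  rw [starProjection_minimal]
  exact ciInf_le ⟨0, by rintro _ ⟨z, rfl⟩; exact norm_nonneg _⟩ (⟨y, hy⟩ : K)

theorem norm_sub_starProjection_le (x : E) : ‖x - K.starProjection x‖ ≤ ‖x‖ := by
  simpa using norm_sub_starProjection_le_of_mem x K.zero_mem

theorem norm_starProjection_le_of_mem_orthogonal {c : ℝ} (hc : 0 ≤ c)
    (hLK : ∀ x ∈ L, ‖x - K.starProjection x‖ ≤ c * ‖x‖) {u : E} (hu : u ∈ Kᗮ) :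
    ‖L.starProjection u‖ ≤ c * ‖u‖ := by
  set p := L.starProjection u
  -- `⟪K.starProjection p, u⟫ = 0` as `u ⊥ K`, so only the part of `p` off `K` pairs with `u`.
  have hp : ‖p‖ ^ 2 = ⟪p - K.starProjection p, u⟫ := by
    rw [inner_sub_left, inner_right_of_mem_orthogonal (K.starProjection_apply_mem p) hu,
      sub_zero]
    simpa using (L.re_inner_starProjection_eq_normSq u).symm
  have hle : ‖p‖ ^ 2 ≤ c * ‖p‖ * ‖u‖ :=
    hp ▸ (real_inner_le_norm _ _).trans
      (mul_le_mul_of_nonneg_right (hLK p (L.starProjection_apply_mem u)) (norm_nonneg u))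
  rcases (norm_nonneg p).eq_or_lt with h0 | hpos
  · rw [← h0]; positivity
  · nlinarith

theorem norm_starProjection_sub_starProjection_le {c : ℝ} (hc : 0 ≤ c)
    (hKL : ∀ x ∈ K, ‖x - L.starProjection x‖ ≤ c * ‖x‖)
    (hLK : ∀ x ∈ L, ‖x - K.starProjection x‖ ≤ c * ‖x‖) :
    ‖K.starProjection - L.starProjection‖ ≤ 2 * c := by
  refine ContinuousLinearMap.opNorm_le_bound _ (by positivity) fun z => ?_
  set p := K.starProjection z
  have hsplit : K.starProjection z - L.starProjection z =
      (p - L.starProjection p) - L.starProjection (z - p) := by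
    rw [map_sub]; abel
  calc ‖(K.starProjection - L.starProjection) z‖
      = ‖(p - L.starProjection p) - L.starProjection (z - p)‖ := by
        rw [sub_apply, hsplit]
    _ ≤ c * ‖p‖ + c * ‖z - p‖ :=
        (norm_sub_le _ _).trans (add_le_add (hKL p (K.starProjection_apply_mem z))
          (norm_starProjection_le_of_mem_orthogonal hc hLK (K.sub_starProjection_mem_orthogonal z)))
    _ ≤ c * ‖z‖ + c * ‖z‖ := by
        gcongr
        exacts [K.norm_starProjection_apply_le z, norm_sub_starProjection_le z]
    _ = 2 * c * ‖z‖ := by ring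

end Submodule

theorem norm_sum_smul_sub_sum_smul_le {ι : Type*} [Fintype ι] {u v : ι → E} {a : ι → ℝ}
    {s r : ℝ} (has : ∀ i, |a i| ≤ s) (huv : ∀ i, ‖u i - v i‖ ≤ r) :
    ‖∑ i, a i • u i - ∑ i, a i • v i‖ ≤ Fintype.card ι * s * r :=
  calc ‖∑ i, a i • u i - ∑ i, a i • v i‖ = ‖∑ i, a i • (u i - v i)‖ := by
        simp only [smul_sub, Finset.sum_sub_distrib]
    _ ≤ ∑ i, ‖a i • (u i - v i)‖ := norm_sum_le _ _
    _ ≤ ∑ _i : ι, s * r := Finset.sum_le_sum fun i _ => by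
        rw [norm_smul, Real.norm_eq_abs]
        exact mul_le_mul (has i) (huv i) (norm_nonneg _) ((abs_nonneg _).trans (has i))
    _ = Fintype.card ι * s * r := by
        rw [Finset.sum_const, Finset.card_univ, nsmul_eq_mul, mul_assoc]

namespace Orthonormal

variable {ι : Type*} [Fintype ι] {e u v : ι → E} {r ε : ℝ}

theorem abs_le_norm_sum_smul (he : Orthonormal ℝ e) (a : ι → ℝ) (i : ι) :
    |a i| ≤ ‖∑ j, a j • e j‖ :=
  calc |a i| = |⟪e i, ∑ j, a j • e j⟫| := by rw [he.inner_right_fintype]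
    _ ≤ ‖e i‖ * ‖∑ j, a j • e j‖ := abs_real_inner_le_norm _ _
    _ = ‖∑ j, a j • e j‖ := by rw [he.1 i, one_mul]

theorem norm_sum_smul_le_two_mul (he : Orthonormal ℝ e) (hu : ∀ i, ‖u i - e i‖ ≤ r)
    (hr : Fintype.card ι * r ≤ 1 / 2) (a : ι → ℝ) :
    ‖∑ i, a i • e i‖ ≤ 2 * ‖∑ i, a i • u i‖ := by
  set s := ‖∑ i, a i • e i‖
  have hclose : ‖∑ i, a i • e i - ∑ i, a i • u i‖ ≤ Fintype.card ι * s * r :=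
    norm_sum_smul_sub_sum_smul_le (he.abs_le_norm_sum_smul a) fun i => by
      rw [norm_sub_rev]; exact hu i
  have htri : s ≤ ‖∑ i, a i • u i‖ + ‖∑ i, a i • e i - ∑ i, a i • u i‖ :=
    norm_le_insert' _ _
  nlinarith [norm_nonneg (∑ i, a i • e i)]

theorem linearIndependent_of_norm_sub_le (he : Orthonormal ℝ e) (hu : ∀ i, ‖u i - e i‖ ≤ r)
    (hr : Fintype.card ι * r ≤ 1 / 2) : LinearIndependent ℝ u := by
  refine Fintype.linearIndependent_iff.2 fun a ha => ?_
  have h0 : ∑ i, a i • e i = 0 := by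
    simpa [ha] using he.norm_sum_smul_le_two_mul hu hr a
  exact Fintype.linearIndependent_iff.1 he.linearIndependent a h0

theorem exists_mem_span_norm_sub_le (he : Orthonormal ℝ e) (hu : ∀ i, ‖u i - e i‖ ≤ r)
    (hr : Fintype.card ι * r ≤ 1 / 2) (hv : ∀ i, ‖u i - v i‖ ≤ ε) {x : E}
    (hx : x ∈ Submodule.span ℝ (Set.range u)) :
    ∃ y ∈ Submodule.span ℝ (Set.range v), ‖x - y‖ ≤ 2 * Fintype.card ι * ε * ‖x‖ := by
  obtain ⟨a, rfl⟩ := (Submodule.mem_span_range_iff_exists_fun ℝ).1 hx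
  refine ⟨∑ i, a i • v i, Submodule.sum_mem _ fun i _ =>
    Submodule.smul_mem _ _ (Submodule.subset_span ⟨i, rfl⟩), ?_⟩
  have has : ∀ i, |a i| ≤ 2 * ‖∑ i, a i • u i‖ := fun i =>
    (he.abs_le_norm_sum_smul a i).trans (he.norm_sum_smul_le_two_mul hu hr a)
  calc ‖∑ i, a i • u i - ∑ i, a i • v i‖ ≤ Fintype.card ι * (2 * ‖∑ i, a i • u i‖) * ε :=
        norm_sum_smul_sub_sum_smul_le has hv
    _ = 2 * Fintype.card ι * ε * ‖∑ i, a i • u i‖ := by ring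

theorem norm_sub_starProjection_span_le (he : Orthonormal ℝ e) (hu : ∀ i, ‖u i - e i‖ ≤ r)
    (hr : Fintype.card ι * r ≤ 1 / 2) (hv : ∀ i, ‖u i - v i‖ ≤ ε)
    [(Submodule.span ℝ (Set.range v)).HasOrthogonalProjection] {x : E}
    (hx : x ∈ Submodule.span ℝ (Set.range u)) :
    ‖x - (Submodule.span ℝ (Set.range v)).starProjection x‖ ≤ 2 * Fintype.card ι * ε * ‖x‖ := by
  obtain ⟨y, hy, hxy⟩ := he.exists_mem_span_norm_sub_le hu hr hv hx
  exact (Submodule.norm_sub_starProjection_le_of_mem x hy).trans hxy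

end Orthonormal

theorem mul_inv_ten_mul_inv_pow_add_one_le (m : ℕ) :
    (m : ℝ) * (10⁻¹ * ((10 : ℝ) ^ m + 1)⁻¹) ≤ 10⁻¹ := by
  have hm : (m : ℝ) ≤ 10 ^ m + 1 := by
    exact_mod_cast (Nat.lt_pow_self (by norm_num : 1 < 10)).le.trans (Nat.le_succ _)
  rw [mul_left_comm]
  refine mul_le_of_le_one_right (by norm_num) ?_
  rw [← div_eq_mul_inv]
  exact div_le_one_of_le₀ hm (by positivity)

/-- If `e_1, …, e_m` are orthonormal, `h_i ∈ B(e_i, δ)` with `δ < ε₁/2`, and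
`w_i ∈ B(h_i, ε)` with `ε < ε₁/2` (where `ε₁ = 1/(10(10^m+1))`), then
`H = span(h_i)` and `W = span(w_i)` are `m`-dimensional and
`∠(H,W) ≤ c₃ ε` with `c₃ = 14m·20^m`. -/
theorem angle_double_perturbation {n m : ℕ}
    (e h w : Fin m → EuclideanSpace ℝ (Fin n)) (he : Orthonormal ℝ e)
    (δ ε : ℝ)
    (hδ : δ < 10⁻¹ * ((10 : ℝ) ^ m + 1)⁻¹ / 2)
    (hε : ε < 10⁻¹ * ((10 : ℝ) ^ m + 1)⁻¹ / 2)
    (hhe : ∀ i, ‖h i - e i‖ ≤ δ) (hwh : ∀ i, ‖w i - h i‖ ≤ ε)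
    (H W : Submodule ℝ (EuclideanSpace ℝ (Fin n)))
    (hH : H = Submodule.span ℝ (Set.range h))
    (hW : W = Submodule.span ℝ (Set.range w)) :
    Module.finrank ℝ H = m ∧ Module.finrank ℝ W = m ∧
      ‖projL H - projL W‖ ≤ 14 * m * (20 : ℝ) ^ m * ε := by
  have hε₁ := mul_inv_ten_mul_inv_pow_add_one_le m
  have hm : (0 : ℝ) ≤ m := m.cast_nonneg
  have hwe : ∀ i, ‖w i - e i‖ ≤ δ + ε := fun i => by
    linarith [norm_sub_le_norm_sub_add_norm_sub (w i) (h i) (e i), hwh i, hhe i]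
  have hhm : Fintype.card (Fin m) * δ ≤ 1 / 2 := by rw [Fintype.card_fin]; nlinarith
  have hwm : Fintype.card (Fin m) * (δ + ε) ≤ 1 / 2 := by rw [Fintype.card_fin]; nlinarith
  have hmε : 0 ≤ (m : ℝ) * ε := by
    rcases m with _ | k
    · simp
    · exact mul_nonneg hm ((norm_nonneg _).trans (hwh 0))
  subst hH hW
  refine ⟨by rw [finrank_span_eq_card (he.linearIndependent_of_norm_sub_le hhe hhm),
      Fintype.card_fin],
    by rw [finrank_span_eq_card (he.linearIndependent_of_norm_sub_le hwe hwm), Fintype.card_fin],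
    ?_⟩
  calc ‖projL _ - projL _‖ ≤ 2 * (2 * m * ε) :=
        Submodule.norm_starProjection_sub_starProjection_le (by linarith)
          (fun x hx => by
            simpa using he.norm_sub_starProjection_span_le hhe hhm
              (fun i => (norm_sub_rev _ _).trans_le (hwh i)) hx)
          (fun x hx => by simpa using he.norm_sub_starProjection_span_le hwe hwm hwh hx)
    _ ≤ 14 * m * (20 : ℝ) ^ m * ε := by
        nlinarith [one_le_pow₀ (by norm_num : (1 : ℝ) ≤ 20) (n := m)]
end
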